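/- arXiv:2110.09079 — 3 statements merged into one kernel-verified Lean document; each statement's English description precedes it below -/
import Mathlib

section
/- The function F(s) = ∫₀^π cos θ / (2(1−cos θ) + s)^{1/2} dθ, defined for s > 0, is strictly convex: its second derivative F''(s) = ∫₀^π (3/4) cos θ / (2(1−cos θ) + s)^{5/2} dθ is strictly positive for every s > 0. -/
open Real MeasureTheory intervalIntegral

/-- The function F(s) = ∫₀^π cos θ (2(1−cos θ)+s)^{−1/2} dθ. -/
noncomputable def Fell (s : ℝ) : ℝ :=
  ∫ θ in (0:ℝ)..Real.pi, Real.cos θ * (2*(1 - Real.cos θ) + s) ^ (-(1:ℝ)/2)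

/-!
Folding `[0, π]` onto `[0, π/2]` by `θ ↦ π - θ` turns `∫ cos θ · g (cos θ)` into
`∫ cos θ · (g (cos θ) - g (-cos θ))`, where now `cos θ > 0`. For `F` the folded integrand is
`cos θ · ((a + s) ^ (-1/2) - (b + s) ^ (-1/2))` with `a < b`, strictly convex in `s` by a
second-derivative computation, and strict convexity survives integration in `θ`. For `F''` the
folded integrand is positive because `t ↦ t ^ (-5/2)` is decreasing.
-/

open Set

theorem StrictConvexOn.const_mul_of_pos {E : Type*} [AddCommGroup E] [Module ℝ E] {S : Set E}
    {f : E → ℝ} {c : ℝ} (hc : 0 < c) (hf : StrictConvexOn ℝ S f) :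
    StrictConvexOn ℝ S fun x => c * f x := by
  refine ⟨hf.1, fun x hx y hy hxy a b ha hb hab => ?_⟩
  have h := hf.2 hx hy hxy ha hb hab
  simp only [smul_eq_mul] at h ⊢
  nlinarith [mul_lt_mul_of_pos_left h hc]

theorem strictConvexOn_intervalIntegral {E : Type*} [AddCommGroup E] [Module ℝ E] {S : Set E}
    {f : ℝ → E → ℝ} {a b : ℝ} (hab : a < b) (hf : ∀ θ ∈ Ioo a b, StrictConvexOn ℝ S (f θ))
    (hint : ∀ x ∈ S, IntervalIntegrable (f · x) volume a b) :
    StrictConvexOn ℝ S fun x => ∫ θ in a..b, f θ x := by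
  have hS : Convex ℝ S := (hf _ ⟨left_lt_add_div_two.2 hab, add_div_two_lt_right.2 hab⟩).1
  refine ⟨hS, fun x hx y hy hxy μ ν hμ hν hμν => ?_⟩
  have hz : μ • x + ν • y ∈ S := hS hx hy hμ.le hν.le hμν
  have hcomb := ((hint x hx).const_mul μ).add ((hint y hy).const_mul ν)
  simp only [smul_eq_mul]
  rw [← sub_pos, ← intervalIntegral.integral_const_mul, ← intervalIntegral.integral_const_mul,
    ← intervalIntegral.integral_add ((hint x hx).const_mul μ) ((hint y hy).const_mul ν),
    ← intervalIntegral.integral_sub hcomb (hint _ hz)]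
  refine intervalIntegral_pos_of_pos_on (hcomb.sub (hint _ hz)) (fun θ hθ => ?_) hab
  simpa only [sub_pos, smul_eq_mul] using (hf θ hθ).2 hx hy hxy hμ hν hμν

theorem hasDerivAt_const_add_rpow {c p s : ℝ} (h : 0 < c + s) :
    HasDerivAt (fun u => (c + u) ^ p) (p * (c + s) ^ (p - 1)) s := by
  simpa using ((hasDerivAt_id s).const_add c).rpow_const (p := p) (Or.inl h.ne')

/-- For `p < 0` the second derivative is `p (p - 1) ((a + s) ^ (p - 2) - (b + s) ^ (p - 2)) > 0`. -/
theorem strictConvexOn_const_add_rpow_sub {p a b : ℝ} (hp : p < 0) (hab : a < b) :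
    StrictConvexOn ℝ (Ioi (-a)) fun s => (a + s) ^ p - (b + s) ^ p := by
  have hfirst : ∀ u ∈ Ioi (-a), HasDerivAt (fun s => (a + s) ^ p - (b + s) ^ p)
      (p * (a + u) ^ (p - 1) - p * (b + u) ^ (p - 1)) u := fun u (hu : -a < u) =>
    (hasDerivAt_const_add_rpow (by linarith)).sub (hasDerivAt_const_add_rpow (by linarith))
  refine strictConvexOn_of_deriv2_pos (convex_Ioi _)
    (fun u hu => (hfirst u hu).continuousAt.continuousWithinAt) fun s hs => ?_
  rw [interior_Ioi] at hs
  have has : 0 < a + s := neg_lt_iff_pos_add'.1 hs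
  have hsecond : HasDerivAt (fun u => p * (a + u) ^ (p - 1) - p * (b + u) ^ (p - 1))
      (p * ((p - 1) * (a + s) ^ (p - 1 - 1)) - p * ((p - 1) * (b + s) ^ (p - 1 - 1))) s :=
    ((hasDerivAt_const_add_rpow has).const_mul p).sub
      ((hasDerivAt_const_add_rpow (by linarith)).const_mul p)
  have hderiv : deriv (fun s => (a + s) ^ p - (b + s) ^ p) =ᶠ[nhds s]
      fun u => p * (a + u) ^ (p - 1) - p * (b + u) ^ (p - 1) := by
    filter_upwards [Ioi_mem_nhds hs] with u hu using (hfirst u hu).deriv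
  rw [Function.iterate_succ_apply, Function.iterate_one, hderiv.deriv_eq, hsecond.deriv]
  have hlt : (b + s) ^ (p - 1 - 1) < (a + s) ^ (p - 1 - 1) :=
    rpow_lt_rpow_of_neg has (by linarith) (by linarith)
  nlinarith [mul_pos (mul_pos_of_neg_of_neg hp (by linarith : p - 1 < 0)) (sub_pos.2 hlt)]

theorem integral_eq_integral_add_comp_sub {f : ℝ → ℝ} (hf : Continuous f) (a b : ℝ) :
    ∫ x in a..b, f x = ∫ x in a..(a + b) / 2, (f x + f (a + b - x)) := by
  have hreflect : ∫ x in a..(a + b) / 2, f (a + b - x) = ∫ x in (a + b) / 2..b, f x := by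
    rw [integral_comp_sub_left]
    congr 1 <;> ring
  have hint : IntervalIntegrable (fun x => f (a + b - x)) volume a ((a + b) / 2) :=
    (hf.comp (continuous_sub_left _)).intervalIntegrable _ _
  rw [intervalIntegral.integral_add (hf.intervalIntegrable _ _) hint,
    hreflect,
    integral_add_adjacent_intervals (hf.intervalIntegrable _ _) (hf.intervalIntegrable _ _)]

theorem integral_cos_mul_comp_cos {g : ℝ → ℝ} (hg : ContinuousOn g (Icc (-1) 1)) :
    ∫ θ in (0:ℝ)..π, cos θ * g (cos θ) =
      ∫ θ in (0:ℝ)..π / 2, cos θ * (g (cos θ) - g (-cos θ)) := by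
  have hcont : Continuous fun θ => cos θ * g (cos θ) :=
    continuous_cos.mul (hg.comp_continuous continuous_cos fun θ => ⟨neg_one_le_cos θ, cos_le_one θ⟩)
  rw [integral_eq_integral_add_comp_sub hcont, zero_add]
  congr 1 with θ
  rw [cos_pi_sub]
  ring

theorem continuous_cos_mul_sub_comp_neg_cos {g : ℝ → ℝ} (hg : ContinuousOn g (Icc (-1) 1)) :
    Continuous fun θ => cos θ * (g (cos θ) - g (-cos θ)) := by
  refine continuous_cos.mul (.sub ?_ ?_)
  · exact hg.comp_continuous continuous_cos fun θ => ⟨neg_one_le_cos θ, cos_le_one θ⟩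
  · exact hg.comp_continuous continuous_cos.neg fun θ =>
      ⟨neg_le_neg (cos_le_one θ), neg_le.1 (neg_one_le_cos θ)⟩

theorem integral_cos_mul_comp_cos_pos {g : ℝ → ℝ} (hg : ContinuousOn g (Icc (-1) 1))
    (hg_lt : ∀ c ∈ Ioc (0:ℝ) 1, g (-c) < g c) :
    0 < ∫ θ in (0:ℝ)..π, cos θ * g (cos θ) := by
  rw [integral_cos_mul_comp_cos hg]
  refine intervalIntegral_pos_of_pos_on
    ((continuous_cos_mul_sub_comp_neg_cos hg).intervalIntegrable _ _) (fun θ hθ => ?_)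
    pi_div_two_pos
  have hcos : 0 < cos θ := cos_pos_of_mem_Ioo ⟨by linarith [hθ.1, pi_pos], hθ.2⟩
  exact mul_pos hcos (sub_pos.2 (hg_lt _ ⟨hcos, cos_le_one θ⟩))

theorem continuousOn_two_mul_one_sub_add_rpow {s : ℝ} (hs : 0 < s) (p : ℝ) :
    ContinuousOn (fun c => (2 * (1 - c) + s) ^ p) (Iic 1) :=
  ContinuousOn.rpow_const (by fun_prop) fun c (hc : c ≤ 1) => Or.inl (by linarith)

/-- F is strictly convex on (0,∞), and its second derivative, given by
∫₀^π (3/4) cos θ (2(1−cos θ)+s)^{−5/2} dθ, is strictly positive for every s > 0. -/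
theorem stmt2 :
    StrictConvexOn ℝ (Set.Ioi (0:ℝ)) Fell ∧
    ∀ s : ℝ, 0 < s →
      0 < ∫ θ in (0:ℝ)..Real.pi,
            (3/4) * Real.cos θ * (2*(1 - Real.cos θ) + s) ^ (-(5:ℝ)/2) := by
  have hcont : ∀ s > 0, ∀ p : ℝ, ContinuousOn (fun c : ℝ => (2 * (1 - c) + s) ^ p) (Icc (-1) 1) :=
    fun s hs p => (continuousOn_two_mul_one_sub_add_rpow hs p).mono Icc_subset_Iic_self
  refine ⟨?_, fun s hs => ?_⟩
  · have hfold : EqOn (fun s => ∫ θ in (0:ℝ)..π / 2, cos θ *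
        ((2 * (1 - cos θ) + s) ^ (-(1:ℝ)/2) - (2 * (1 - -cos θ) + s) ^ (-(1:ℝ)/2))) Fell (Ioi 0) :=
      fun s hs => (integral_cos_mul_comp_cos (hcont s hs _)).symm
    refine (strictConvexOn_intervalIntegral pi_div_two_pos (fun θ hθ => ?_) fun s hs =>
      (continuous_cos_mul_sub_comp_neg_cos (hcont s hs _)).intervalIntegrable _ _).congr hfold
    have hcos : 0 < cos θ := cos_pos_of_mem_Ioo ⟨by linarith [hθ.1, pi_pos], hθ.2⟩
    exact ((strictConvexOn_const_add_rpow_sub (by norm_num) (by linarith)).subset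
      (Ioi_subset_Ioi (by linarith [cos_le_one θ])) (convex_Ioi 0)).const_mul_of_pos hcos
  · refine (integral_cos_mul_comp_cos_pos (g := fun c => 3/4 * (2 * (1 - c) + s) ^ (-(5:ℝ)/2))
      (continuousOn_const.mul (hcont s hs _)) fun c hc => ?_).trans_eq ?_
    · have hpos : 0 < 2 * (1 - c) + s := by linarith [hc.2]
      have hlt := rpow_lt_rpow_of_neg hpos
        (by linarith [hc.1] : 2 * (1 - c) + s < 2 * (1 - -c) + s) (by norm_num : -(5:ℝ)/2 < 0)
      linarith
    · congr 1 with θ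
      ring
end

section
/- For every s > 0, the quantity ∫₀^π (3/4) cos θ / (2(1−cos θ) + s)^{5/2} dθ is strictly positive. Equivalently, after pairing θ with π−θ, the integrand combination (3/4) cos θ [ (2(1−cos θ)+s)^{−5/2} − (2(1+cos θ)+s)^{−5/2} ] is nonnegative on (0, π/2) and positive on a set of positive measure. -/
/-!
Reflecting θ ↦ π − θ turns the integral over [π/2, π] into one over [0, π/2] with cos θ replaced
by −cos θ, so the integral equals that of the paired integrand over (0, π/2). There cos θ > 0
and 2(1 − cos θ) + s < 2(1 + cos θ) + s, an order that the negative power −5/2 reverses.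
-/

open Real MeasureTheory Set

theorem intervalIntegral.integral_eq_integral_add_comp_sub_left {E : Type*}
    [NormedAddCommGroup E] [NormedSpace ℝ E] {f : ℝ → E} {a : ℝ}
    (hf : IntervalIntegrable f volume 0 a) :
    ∫ x in 0..a, f x = ∫ x in 0..a/2, (f x + f (a - x)) := by
  have hmid : a / 2 ∈ uIcc 0 a := by
    rcases le_total 0 a with ha | ha
    · exact mem_uIcc_of_le (by linarith) (by linarith)
    · exact mem_uIcc_of_ge (by linarith) (by linarith)
  have hleft : IntervalIntegrable f volume 0 (a / 2) :=
    hf.mono_set (uIcc_subset_uIcc_left hmid)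
  have hright : IntervalIntegrable f volume (a / 2) a :=
    hf.mono_set (uIcc_subset_uIcc_right hmid)
  have hreflect : IntervalIntegrable (fun x => f (a - x)) volume 0 (a / 2) := by
    simpa [show a - a / 2 = a / 2 by ring] using (hright.comp_sub_left a).symm
  rw [intervalIntegral.integral_add hleft hreflect, intervalIntegral.integral_comp_sub_left,
    ← intervalIntegral.integral_add_adjacent_intervals hleft hright]
  congr 2 <;> ring

theorem cos_mul_rpow_sub_rpow_pos {k s p θ : ℝ} (hk : 0 < k) (hs : 0 < s) (hp : p < 0)
    (hθ : θ ∈ Ioo 0 (π / 2)) :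
    0 < k * cos θ * ((2 * (1 - cos θ) + s) ^ p - (2 * (1 + cos θ) + s) ^ p) := by
  have hcos : 0 < cos θ := cos_pos_of_mem_Ioo ⟨by linarith [hθ.1, pi_pos], hθ.2⟩
  have hbase : 0 < 2 * (1 - cos θ) + s := by linarith [cos_le_one θ]
  have hlt : (2 * (1 + cos θ) + s) ^ p < (2 * (1 - cos θ) + s) ^ p :=
    rpow_lt_rpow_of_neg hbase (by linarith) hp
  exact mul_pos (mul_pos hk hcos) (sub_pos.mpr hlt)

theorem continuous_cos_mul_rpow {k s p : ℝ} (hs : 0 < s) :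
    Continuous fun θ => k * cos θ * (2 * (1 - cos θ) + s) ^ p := by
  have hbase : Continuous fun θ => 2 * (1 - cos θ) + s := by fun_prop
  exact (continuous_const.mul continuous_cos).mul <|
    hbase.rpow_const fun θ => Or.inl (by linarith [cos_le_one θ])

/-- For every s > 0, ∫₀^π (3/4) cos θ (2(1−cos θ)+s)^{−5/2} dθ > 0; moreover the
symmetrized integrand (3/4) cos θ [(2(1−cos θ)+s)^{−5/2} − (2(1+cos θ)+s)^{−5/2}]
is nonnegative on (0, π/2) and positive on a set of positive measure. -/
theorem stmt3 (s : ℝ) (hs : 0 < s) :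
    (0 < ∫ θ in (0:ℝ)..Real.pi,
        (3/4) * Real.cos θ * (2*(1 - Real.cos θ) + s) ^ (-(5:ℝ)/2))
    ∧ (∀ θ ∈ Set.Ioo (0:ℝ) (Real.pi/2),
        0 ≤ (3/4) * Real.cos θ *
          ((2*(1 - Real.cos θ) + s) ^ (-(5:ℝ)/2)
            - (2*(1 + Real.cos θ) + s) ^ (-(5:ℝ)/2)))
    ∧ 0 < volume {θ : ℝ | θ ∈ Set.Ioo (0:ℝ) (Real.pi/2) ∧
        0 < (3/4) * Real.cos θ *
          ((2*(1 - Real.cos θ) + s) ^ (-(5:ℝ)/2)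
            - (2*(1 + Real.cos θ) + s) ^ (-(5:ℝ)/2))} := by
  have hpaired : ∀ θ ∈ Ioo 0 (π / 2), 0 < (3/4) * cos θ *
      ((2*(1 - cos θ) + s) ^ (-(5:ℝ)/2) - (2*(1 + cos θ) + s) ^ (-(5:ℝ)/2)) :=
    fun θ hθ => cos_mul_rpow_sub_rpow_pos (by norm_num) hs (by norm_num) hθ
  refine ⟨?_, fun θ hθ => (hpaired θ hθ).le, ?_⟩
  · have hcont := continuous_cos_mul_rpow (k := 3/4) (p := -(5:ℝ)/2) hs
    rw [intervalIntegral.integral_eq_integral_add_comp_sub_left (hcont.intervalIntegrable _ _)]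
    refine intervalIntegral.intervalIntegral_pos_of_pos_on
      ((hcont.add (hcont.comp (continuous_sub_left π))).intervalIntegrable _ _)
      (fun θ hθ => ?_) (by linarith [pi_pos])
    convert hpaired θ hθ using 1
    simp only [cos_pi_sub, sub_neg_eq_add]
    ring
  · rw [sep_eq_self_iff_mem_true.mpr hpaired, volume_Ioo, ENNReal.ofReal_pos]
    linarith [pi_pos]
end

section
/- Let ξ solve ∂_t ξ + u·∇ξ = 0 in the quadrant [0,L]² along the flow Φ of a velocity field u with u^r(t,0,z) = 0 and u^z(t,r,0) = 0, and suppose −∂_z u^z(t,r,z) ≥ c > 0 on [0,L]² for all t. If ξ(0,r,z) = −z on [0,L]² and the trajectory x(τ) = Φ(τ, x₀) stays in [0,L]² for τ ∈ [0,t], then for any α ∈ (0,1], writing h(t) = −ξ(t,x(t))/(x^z(t))^α, one has d/dt [ log( −ξ(t,x(t)) ) − α log( x^z(t) ) ] = −α · [u^z/z](t, x(t)) ≥ α c, since u^z(t,x(t)) ≤ −c·x^z(t); hence h(t) ≥ h(0) e^{α c t}, i.e. −ξ(t,x(t))/(x^z(t))^α ≥ (x₀^z)^{1−α} e^{α c t}.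 -/
open Real

/-- Growth of the Hölder quotient along a trajectory in the square [0,L]²: if the
vertical velocity satisfies u^z ≤ −c z there, ξ is transported (constant along the
trajectory) with initial data ξ(0,·) = −z, and the trajectory stays in the square with
positive height, then for α ∈ (0,1],
−ξ(t,x(t))/(x^z(t))^α ≥ (x₀^z)^{1−α} e^{αct}. -/
theorem stmt19 (L c α T : ℝ) (hL : 0 < L) (hc : 0 < c) (hα0 : 0 < α) (hα1 : α ≤ 1)
    (hT : 0 ≤ T)
    (x : ℝ → ℝ × ℝ) (uz : ℝ → ℝ × ℝ → ℝ) (ξ : ℝ → ℝ × ℝ → ℝ)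
    (hx : ∀ t ∈ Set.Icc 0 T, x t ∈ Set.Icc (0:ℝ) L ×ˢ Set.Icc (0:ℝ) L)
    (hpos : ∀ t ∈ Set.Icc 0 T, 0 < (x t).2)
    (hflow : ∀ t ∈ Set.Icc 0 T, HasDerivAt (fun s => (x s).2) (uz t (x t)) t)
    (huz : ∀ t ∈ Set.Icc 0 T, ∀ p ∈ Set.Icc (0:ℝ) L ×ˢ Set.Icc (0:ℝ) L,
      uz t p ≤ -c * p.2)
    (hξconst : ∀ t ∈ Set.Icc 0 T, ξ t (x t) = ξ 0 (x 0))
    (hinit : ξ 0 (x 0) = -(x 0).2) :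
    ∀ t ∈ Set.Icc 0 T,
      ((x 0).2) ^ (1 - α) * Real.exp (α * c * t)
        ≤ -ξ t (x t) / ((x t).2) ^ α := by
  intro t ht
  have h0 : (0:ℝ) ∈ Set.Icc 0 T := ⟨le_refl 0, hT⟩
  set g : ℝ → ℝ := fun s => (x s).2 * Real.exp (c * s) with hg_def
  -- derivative of g on Icc
  have hgderiv : ∀ s ∈ Set.Icc 0 T,
      HasDerivAt g (uz s (x s) * Real.exp (c * s) + (x s).2 * (Real.exp (c * s) * c)) s := by
    intro s hs
    have hexp : HasDerivAt (fun r : ℝ => Real.exp (c * r)) (Real.exp (c * s) * c) s := by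
      simpa using ((hasDerivAt_id s).const_mul c).exp
    exact (hflow s hs).mul hexp
  have hanti : AntitoneOn g (Set.Icc 0 T) := by
    apply antitoneOn_of_deriv_nonpos (convex_Icc 0 T)
    · intro s hs
      exact ((hgderiv s hs).continuousAt).continuousWithinAt
    · intro s hs
      rw [interior_Icc] at hs
      exact ((hgderiv s ⟨hs.1.le, hs.2.le⟩).differentiableAt).differentiableWithinAt
    · intro s hs
      rw [interior_Icc] at hs
      have hs' : s ∈ Set.Icc 0 T := ⟨hs.1.le, hs.2.le⟩
      rw [(hgderiv s hs').deriv]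
      have h1 : uz s (x s) ≤ -c * (x s).2 := huz s hs' (x s) (hx s hs')
      have h2 : (0:ℝ) < Real.exp (c * s) := Real.exp_pos _
      nlinarith
  have hgle : g t ≤ g 0 := hanti h0 ht ht.1
  have hy0 : 0 < (x 0).2 := hpos 0 h0
  have hyt : 0 < (x t).2 := hpos t ht
  have hdecay : (x t).2 * Real.exp (c * t) ≤ (x 0).2 := by
    have : g 0 = (x 0).2 := by simp [hg_def]
    simpa [this] using hgle
  have hyt' : (x t).2 ≤ (x 0).2 * Real.exp (-(c * t)) := by
    have he : (0:ℝ) < Real.exp (c * t) := Real.exp_pos _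
    rw [Real.exp_neg, ← div_eq_mul_inv, le_div_iff₀ he]
    exact hdecay
  -- rpow estimate
  have hrpow : ((x t).2) ^ α ≤ ((x 0).2) ^ α * Real.exp (-(c * t) * α) := by
    have h1 : ((x t).2) ^ α ≤ ((x 0).2 * Real.exp (-(c * t))) ^ α :=
      Real.rpow_le_rpow hyt.le hyt' hα0.le
    have h2 : ((x 0).2 * Real.exp (-(c * t))) ^ α
        = ((x 0).2) ^ α * Real.exp (-(c * t) * α) := by
      rw [Real.mul_rpow hy0.le (Real.exp_pos _).le, ← Real.exp_mul]
    linarith [h1, h2.le]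
  have hξ : -ξ t (x t) = (x 0).2 := by rw [hξconst t ht, hinit]; ring
  rw [hξ, le_div_iff₀ (Real.rpow_pos_of_pos hyt α)]
  have hmul : ((x 0).2) ^ (1 - α) * Real.exp (α * c * t) * ((x t).2) ^ α
      ≤ ((x 0).2) ^ (1 - α) * Real.exp (α * c * t) * (((x 0).2) ^ α * Real.exp (-(c * t) * α)) := by
    apply mul_le_mul_of_nonneg_left hrpow
    positivity
  calc ((x 0).2) ^ (1 - α) * Real.exp (α * c * t) * ((x t).2) ^ α
      ≤ ((x 0).2) ^ (1 - α) * Real.exp (α * c * t) * (((x 0).2) ^ α * Real.exp (-(c * t) * α)) :=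
        hmul
    _ = ((x 0).2 ^ (1 - α) * (x 0).2 ^ α) * (Real.exp (α * c * t) * Real.exp (-(c * t) * α)) := by
        ring
    _ = (x 0).2 := by
        have e1 : (x 0).2 ^ (1 - α) * (x 0).2 ^ α = (x 0).2 := by
          rw [← Real.rpow_add hy0]; norm_num
        have e2 : Real.exp (α * c * t) * Real.exp (-(c * t) * α) = 1 := by
          rw [← Real.exp_add, show α * c * t + -(c * t) * α = 0 by ring, Real.exp_zero]
        rw [e1, e2, mul_one]
end
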